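/- arXiv:2202.11329 — 4 statements merged into one kernel-verified Lean document; each statement's English description precedes it below -/
import Mathlib

section
/- For every prime p with p ≡ 1 (mod 20) and p ∤ 10, if 10 divides Ind_p(−100) then 20 divides Ind_p(−100); consequently no positive integer congruent to 10 modulo 20 is in the image of the map p ↦ Ind_p(−100). -/
/-!
Write `ind a = (p - 1) / orderOf a`. For `k ∣ p - 1` we have `k ∣ ind a ↔ a ^ ((p - 1) / k) = 1`,
i.e. `k ∣ ind a` iff `a` is a `k`-th power. If `10 ∣ ind (-100)`, then `10 ∣ p - 1` and `-100` is a
square, so `-1` is a square and `p ≡ 1 (mod 4)`; together `p ≡ 1 (mod 20)`. For such `p` both `-1`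
and `5` (by quadratic reciprocity) are squares, say `i ^ 2 = -1` and `s ^ 2 = 5`, and
`(s (1 + i)) ^ 4 = -100`; so `4 ∣ ind (-100)` as well, hence `20 ∣ ind (-100)`.
-/

theorem dvd_div_orderOf_iff_pow_eq_one {G : Type*} [Monoid G] {a : G} {n k : ℕ}
    (ha : a ^ n = 1) (hk : k ∣ n) : k ∣ n / orderOf a ↔ a ^ (n / k) = 1 := by
  rw [← orderOf_dvd_iff_pow_eq_one, Nat.dvd_div_iff_mul_dvd hk,
    Nat.dvd_div_iff_mul_dvd (orderOf_dvd_of_pow_eq_one ha), mul_comm]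

theorem neg_hundred_eq_pow_four {R : Type*} [CommRing R] {s i : R} (hs : s * s = 5)
    (hi : i * i = -1) : (s * (1 + i)) ^ 4 = -100 := by
  have hsq : (s * (1 + i)) ^ 2 = 10 * i := by linear_combination (1 + i) ^ 2 * hs + 5 * hi
  linear_combination ((s * (1 + i)) ^ 2 + 10 * i) * hsq + 100 * hi

namespace ZMod

variable {p : ℕ} [Fact p.Prime]

theorem neg_hundred_ne_zero (hp : ¬ p ∣ 10) : (-100 : ZMod p) ≠ 0 := by
  have h10 : (10 : ZMod p) ≠ 0 := fun h => hp ((natCast_eq_zero_iff 10 p).mp (by exact_mod_cast h))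
  rw [show (-100 : ZMod p) = -(10 ^ 2) by norm_num]
  exact neg_ne_zero.mpr (pow_ne_zero 2 h10)

theorem isSquare_five (hp2 : p ≠ 2) (hp5 : p % 5 = 1) : IsSquare (5 : ZMod p) := by
  have : Fact (Nat.Prime 5) := ⟨by norm_num⟩
  have hp : (p : ZMod 5) = 1 := by rw [← natCast_mod, hp5, Nat.cast_one]
  exact_mod_cast (exists_sq_eq_prime_iff_of_mod_four_eq_one (p := 5) rfl hp2).mp
    (hp ▸ IsSquare.one)

theorem exists_pow_four_eq_neg_hundred (hp : p % 20 = 1) : ∃ c : ZMod p, c ^ 4 = -100 := by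
  obtain ⟨i, hi⟩ := exists_sq_eq_neg_one_iff.mpr (show p % 4 ≠ 3 by omega)
  obtain ⟨s, hs⟩ := isSquare_five (p := p) (by omega) (by omega)
  exact ⟨s * (1 + i), neg_hundred_eq_pow_four hs.symm hi.symm⟩

theorem four_dvd_index_neg_hundred (hp : p % 20 = 1) :
    4 ∣ (p - 1) / orderOf (-100 : ZMod p) := by
  have hp10 : ¬ p ∣ 10 := fun h => by
    have := Nat.le_of_dvd (by norm_num) h
    exact (Fact.out : p.Prime).one_lt.ne' (by omega)
  obtain ⟨c, hc⟩ := exists_pow_four_eq_neg_hundred hp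
  have hne := neg_hundred_ne_zero hp10
  have hc0 : c ≠ 0 := by rintro rfl; exact hne (by simpa using hc.symm)
  have h4 : 4 ∣ p - 1 := by omega
  rw [dvd_div_orderOf_iff_pow_eq_one (pow_card_sub_one_eq_one hne) h4, ← hc, ← pow_mul,
    Nat.mul_div_cancel' h4, pow_card_sub_one_eq_one hc0]

theorem mod_twenty_eq_one_of_ten_dvd_index_neg_hundred (hp10 : ¬ p ∣ 10)
    (h : 10 ∣ (p - 1) / orderOf (-100 : ZMod p)) : p % 20 = 1 := by
  have hne := neg_hundred_ne_zero hp10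
  have hpow := pow_card_sub_one_eq_one hne
  have h10 : 10 ∣ p - 1 := h.trans (Nat.div_dvd_of_dvd (orderOf_dvd_of_pow_eq_one hpow))
  have hsq : IsSquare (-100 : ZMod p) := by
    rw [euler_criterion p hne, show p / 2 = (p - 1) / 2 by omega,
      ← dvd_div_orderOf_iff_pow_eq_one hpow (by omega)]
    exact (by norm_num : 2 ∣ 10).trans h
  have h4 : p % 4 ≠ 3 := by
    refine exists_sq_eq_neg_one_iff.mp ?_
    have h100 : (100 : ZMod p) ≠ 0 := by simpa using hne
    have : (-100 : ZMod p) / (10 * 10) = -1 := by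
      rw [show (10 : ZMod p) * 10 = 100 by norm_num, neg_div, div_self h100]
    exact this ▸ hsq.div (IsSquare.mul_self 10)
  have := (Fact.out : p.Prime).two_le
  omega

end ZMod

theorem stmt_6 :
    (∀ p : ℕ, p.Prime → p % 20 = 1 → ¬ p ∣ 10 →
      (10 ∣ (p - 1) / orderOf (-100 : ZMod p) → 20 ∣ (p - 1) / orderOf (-100 : ZMod p))) ∧
    ∀ n : ℕ, 0 < n → n % 20 = 10 →
      ¬ ∃ p : ℕ, p.Prime ∧ ¬ p ∣ 10 ∧ (p - 1) / orderOf (-100 : ZMod p) = n := by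
  constructor
  · intro p hp h20 _ h10
    have : Fact p.Prime := ⟨hp⟩
    have h4 := ZMod.four_dvd_index_neg_hundred h20
    omega
  · rintro n - hn ⟨p, hp, hp10, rfl⟩
    have : Fact p.Prime := ⟨hp⟩
    have h20 := ZMod.mod_twenty_eq_one_of_ten_dvd_index_neg_hundred hp10 (by omega)
    have h4 := ZMod.four_dvd_index_neg_hundred h20
    omega
end

section
/- Every rational number a ∉ {0, 1, −1} can be written uniquely as a = (−1)^ε · (b² · 2^δ · T)^{2^d} where ε, δ ∈ {0,1}, b ∈ ℚ^×, d ≥ 0 is an integer, not both δ = 0 and T = 1, and T is a squarefree integer of the form T = ∏_{pᵢ ≡ 1 (4)} pᵢ · ∏_{qⱼ ≡ 3 (4)} (−qⱼ) for distinct odd primes pᵢ, qⱼ. -/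
/-- The decomposition data `(ε, δ, d, T)` of a rational `a ∉ {0, 1, -1}`:
`a = (-1)^ε (b² 2^δ T)^{2^d}` with `ε, δ ∈ {0,1}`, `d ≥ 0`, `b ∈ ℚ^×`, not both `δ = 0` and
`T = 1`, and `T` a squarefree odd integer with `T ≡ 1 (mod 4)` (equivalently, `T` is a
product of distinct primes `pᵢ ≡ 1 (mod 4)` times a product of `-qⱼ` with `qⱼ ≡ 3 (mod 4)`
distinct primes). -/
def IsIndexDecomposition (a : ℚ) (ε δ d : ℕ) (T : ℤ) : Prop :=
  ε ≤ 1 ∧ δ ≤ 1 ∧ Odd T ∧ Squarefree T ∧ T % 4 = 1 ∧ ¬ (δ = 0 ∧ T = 1) ∧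
    ∃ b : ℚ, b ≠ 0 ∧ a = (-1) ^ ε * ((b ^ 2 * 2 ^ δ * T) ^ (2 ^ d))

/-!
Every nonzero rational is `±b²·2^δ·T`: take the squarefree part of `num·den`, split off its
factor 2, and move a sign into `±` so that the odd part is `≡ 1 (mod 4)`. Since a squarefree
integer is determined by its class modulo rational squares, such a form with `(δ, T) ≠ (0, 1)`
has non-square absolute value, and two of them with equal absolute values coincide.

Existence: if `|a| = r²`, decompose `r` (which has smaller `|num|·den`) and raise `d` by one;
otherwise take `d = 0`. Uniqueness: `|a| = |c|^(2^d)` with `|c|` not a square determines `d`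
and `|c|`, hence `c`, `δ`, `T`, and finally the sign `ε`.
-/

theorem Int.squarefree_neg {n : ℤ} : Squarefree (-n) ↔ Squarefree n := by
  rw [← Int.squarefree_natAbs, Int.natAbs_neg, Int.squarefree_natAbs]

theorem Int.squarefree_two_mul {t : ℤ} (ht : Odd t) (hts : Squarefree t) :
    Squarefree (2 * t) := by
  rw [← Int.squarefree_natAbs, Int.natAbs_mul] at *
  exact Nat.squarefree_mul (Nat.coprime_two_left.mpr (Int.natAbs_odd.mpr ht)) |>.mpr
    ⟨Nat.squarefree_two, hts⟩

theorem Nat.eq_of_squarefree_of_isSquare_mul {m n : ℕ} (hm : Squarefree m) (hn : Squarefree n)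
    (hmn : IsSquare (m * n)) : m = n := by
  obtain ⟨j, hj⟩ := hmn
  have hj0 : j ≠ 0 := by rintro rfl; simp_all [hm.ne_zero, hn.ne_zero]
  refine Nat.eq_of_factorization_eq hm.ne_zero hn.ne_zero fun p => ?_
  have hp := congrArg (·.factorization p) hj
  simp only [Nat.factorization_mul hm.ne_zero hn.ne_zero, Nat.factorization_mul hj0 hj0,
    Finsupp.add_apply] at hp
  have := hm.natFactorization_le_one p
  have := hn.natFactorization_le_one p
  omega

theorem Int.eq_of_squarefree_of_isSquare_mul {m n : ℤ} (hm : Squarefree m) (hn : Squarefree n)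
    (hmn : IsSquare (m * n)) : m = n := by
  obtain ⟨j, hj⟩ := hmn
  have habs : m.natAbs = n.natAbs :=
    Nat.eq_of_squarefree_of_isSquare_mul (Int.squarefree_natAbs.mpr hm)
      (Int.squarefree_natAbs.mpr hn) ⟨j.natAbs, by rw [← Int.natAbs_mul, hj, Int.natAbs_mul]⟩
  rcases Int.natAbs_eq_natAbs_iff.mp habs with h | rfl
  · exact h
  · have : n ≠ 0 := hn.ne_zero
    nlinarith [sq_nonneg j, sq_pos_of_ne_zero this]

theorem Int.eq_of_sq_mul_eq_sq_mul {m n : ℤ} (hm : Squarefree m) (hn : Squarefree n) {b c : ℚ}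
    (hb : b ≠ 0) (h : b ^ 2 * m = c ^ 2 * n) : m = n := by
  refine Int.eq_of_squarefree_of_isSquare_mul hm hn (Rat.isSquare_intCast_iff.mp ⟨c * n / b, ?_⟩)
  field_simp
  push_cast
  linear_combination (n : ℚ) * h

theorem eq_of_pow_two_pow_eq_of_not_isSquare {R : Type*} [Semiring R] [LinearOrder R]
    [IsStrictOrderedRing R] {x y : R} (hx : 0 ≤ x) (hy : 0 ≤ y)
    (hxs : ¬IsSquare x) (hys : ¬IsSquare y) {d e : ℕ} (h : x ^ 2 ^ d = y ^ 2 ^ e) :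
    d = e ∧ x = y := by
  wlog hde : d ≤ e generalizing x y d e
  · obtain ⟨h1, h2⟩ := this hy hx hys hxs h.symm (by omega)
    exact ⟨h1.symm, h2.symm⟩
  obtain ⟨k, rfl⟩ := Nat.exists_eq_add_of_le hde
  have hxy : x = y ^ 2 ^ k := by
    rw [pow_add, pow_mul', pow_left_inj₀ hx (pow_nonneg hy _) (pow_ne_zero d two_ne_zero)] at h
    exact h
  cases k with
  | zero => simpa using hxy
  | succ k => exact absurd ⟨y ^ 2 ^ k, by rw [hxy, pow_succ, pow_mul, sq]⟩ hxs

theorem Int.exists_sq_mul_squarefree (z : ℤ) : ∃ k S : ℤ, Squarefree S ∧ z = k ^ 2 * S := by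
  obtain ⟨s, k, hks, hs⟩ := Nat.sq_mul_squarefree z.natAbs
  have hs' : Squarefree (s : ℤ) := Int.squarefree_natCast.mpr hs
  rcases Int.natAbs_eq z with hz | hz
  · exact ⟨k, s, hs', by rw [hz, ← hks]; push_cast; ring⟩
  · exact ⟨k, -s, Int.squarefree_neg.mpr hs', by rw [hz, ← hks]; push_cast; ring⟩

theorem Rat.exists_sq_mul_squarefree (q : ℚ) :
    ∃ (b : ℚ) (S : ℤ), Squarefree S ∧ q = b ^ 2 * S := by
  obtain ⟨k, S, hS, hk⟩ := Int.exists_sq_mul_squarefree (q.num * q.den)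
  refine ⟨k / q.den, S, hS, ?_⟩
  have hden : (q.den : ℚ) ≠ 0 := Nat.cast_ne_zero.mpr q.den_nz
  rw [div_pow, div_mul_eq_mul_div, eq_div_iff (pow_ne_zero 2 hden)]
  have hk' : (q.num : ℚ) * q.den = k ^ 2 * S := by exact_mod_cast hk
  linear_combination (q.den : ℚ) * Rat.mul_den_eq_num q + hk'

theorem Int.squarefree_two_pow_mul {δ : ℕ} {T : ℤ} (hδ : δ ≤ 1) (hT : Odd T)
    (hTs : Squarefree T) : Squarefree (2 ^ δ * T) := by
  interval_cases δ
  · simpa using hTs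
  · simpa using Int.squarefree_two_mul hT hTs

theorem Int.exists_neg_one_pow_mul_two_pow_mul {S : ℤ} (hS : Squarefree S) :
    ∃ (ε δ : ℕ) (T : ℤ), ε ≤ 1 ∧ δ ≤ 1 ∧ Squarefree T ∧ T % 4 = 1 ∧
      S = (-1) ^ ε * (2 ^ δ * T) := by
  obtain ⟨δ, t, hδ, ht, hts, rfl⟩ :
      ∃ δ : ℕ, ∃ t : ℤ, δ ≤ 1 ∧ Odd t ∧ Squarefree t ∧ S = 2 ^ δ * t := by
    rcases Int.even_or_odd S with ⟨t, rfl⟩ | hS'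
    · have hS2 : Squarefree (2 * t) := by rwa [two_mul]
      refine ⟨1, t, le_rfl, ?_, hS2.of_mul_right, by ring⟩
      rcases Int.even_or_odd t with ⟨u, rfl⟩ | ht
      · exact absurd (hS2 2 ⟨u, by ring⟩) (by decide)
      · exact ht
    · exact ⟨0, S, zero_le_one, hS', hS, by ring⟩
  have ht4 := Int.odd_iff.mp ht
  by_cases h4 : t % 4 = 1
  · exact ⟨0, δ, t, zero_le_one, hδ, hts, h4, by ring⟩
  · exact ⟨1, δ, -t, le_rfl, hδ, Int.squarefree_neg.mpr hts, by omega, by ring⟩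

section SqMulTwoPowMul

variable {δ δ' : ℕ} {T T' : ℤ} {b b' : ℚ}

theorem not_isSquare_abs_sq_mul_two_pow_mul (hδ : δ ≤ 1) (hTs : Squarefree T) (hT4 : T % 4 = 1)
    (hne : ¬(δ = 0 ∧ T = 1)) (hb : b ≠ 0) : ¬IsSquare |b ^ 2 * 2 ^ δ * (T : ℚ)| := by
  rintro ⟨r, hr⟩
  have hn := Int.squarefree_two_pow_mul hδ (Int.odd_iff.mpr (by omega)) hTs
  have hn1 : 2 ^ δ * T = 1 ∨ -(2 ^ δ * T) = 1 := by
    rcases abs_choice (b ^ 2 * 2 ^ δ * (T : ℚ)) with h | h <;> rw [h] at hr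
    · exact .inl <| Int.eq_of_sq_mul_eq_sq_mul hn squarefree_one hb (c := r)
        (by push_cast; linear_combination hr)
    · exact .inr <| Int.eq_of_sq_mul_eq_sq_mul (Int.squarefree_neg.mpr hn) squarefree_one hb
        (c := r) (by push_cast; linear_combination hr)
  interval_cases δ <;> omega

theorem eq_of_abs_sq_mul_two_pow_mul_eq (hδ : δ ≤ 1) (hδ' : δ' ≤ 1) (hTs : Squarefree T)
    (hTs' : Squarefree T') (hT4 : T % 4 = 1) (hT4' : T' % 4 = 1) (hb : b ≠ 0)
    (h : |b ^ 2 * 2 ^ δ * (T : ℚ)| = |b' ^ 2 * 2 ^ δ' * (T' : ℚ)|) :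
    b ^ 2 * 2 ^ δ * (T : ℚ) = b' ^ 2 * 2 ^ δ' * (T' : ℚ) ∧ δ = δ' ∧ T = T' := by
  have hn := Int.squarefree_two_pow_mul hδ (Int.odd_iff.mpr (by omega)) hTs
  have hn' := Int.squarefree_two_pow_mul hδ' (Int.odd_iff.mpr (by omega)) hTs'
  rcases abs_eq_abs.mp h with h | h
  · have := Int.eq_of_sq_mul_eq_sq_mul hn hn' hb (c := b') (by push_cast; linear_combination h)
    refine ⟨h, ?_⟩
    interval_cases δ <;> interval_cases δ' <;> omega
  · have := Int.eq_of_sq_mul_eq_sq_mul hn (Int.squarefree_neg.mpr hn') hb (c := b')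
      (by push_cast; linear_combination h)
    interval_cases δ <;> interval_cases δ' <;> omega

end SqMulTwoPowMul

theorem Rat.exists_neg_one_pow_mul_sq_mul_two_pow_mul (q : ℚ) :
    ∃ (ε δ : ℕ) (T : ℤ) (b : ℚ), ε ≤ 1 ∧ δ ≤ 1 ∧ Squarefree T ∧ T % 4 = 1 ∧
      q = (-1) ^ ε * (b ^ 2 * 2 ^ δ * T) := by
  obtain ⟨b, S, hS, rfl⟩ := Rat.exists_sq_mul_squarefree q
  obtain ⟨ε, δ, T, hε, hδ, hTs, hT4, rfl⟩ := Int.exists_neg_one_pow_mul_two_pow_mul hS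
  exact ⟨ε, δ, T, b, hε, hδ, hTs, hT4, by push_cast; ring⟩

theorem exists_neg_one_pow_mul_abs {R : Type*} [Ring R] [LinearOrder R] (a : R) :
    ∃ ε ≤ 1, a = (-1) ^ ε * |a| := by
  rcases abs_choice a with h | h
  · exact ⟨0, zero_le_one, by rw [h, pow_zero, one_mul]⟩
  · exact ⟨1, le_rfl, by rw [h, pow_one, neg_one_mul, neg_neg]⟩

def ratSize (q : ℚ) : ℕ := q.num.natAbs * q.den

theorem ratSize_sq (q : ℚ) : ratSize (q ^ 2) = ratSize q ^ 2 := by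
  simp only [ratSize, Rat.num_pow, Rat.den_pow, Int.natAbs_pow]
  ring

theorem two_le_ratSize {q : ℚ} (h0 : q ≠ 0) (h1 : |q| ≠ 1) : 2 ≤ ratSize q := by
  have hnum : q.num.natAbs ≠ 0 := Int.natAbs_ne_zero.mpr (Rat.num_ne_zero.mpr h0)
  by_contra! hlt
  have hpos := Nat.pos_of_ne_zero (mul_ne_zero hnum q.den_nz)
  obtain ⟨hn, hd⟩ := mul_eq_one.mp (show q.num.natAbs * q.den = 1 by unfold ratSize at hlt; omega)
  apply h1
  rw [← Rat.coe_int_num_of_den_eq_one hd, ← Int.cast_abs, Int.abs_eq_natAbs, hn]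
  rfl

theorem exists_isIndexDecomposition {a : ℚ} (ha0 : a ≠ 0) (ha1 : |a| ≠ 1) :
    ∃ ε δ d T, IsIndexDecomposition a ε δ d T := by
  induction hn : ratSize |a| using Nat.strong_induction_on generalizing a with
  | _ n ih =>
  by_cases hsq : IsSquare |a|
  · obtain ⟨r, hr_nonneg, har⟩ : ∃ r : ℚ, 0 ≤ r ∧ |a| = r ^ 2 := by
      obtain ⟨r, hr⟩ := hsq
      exact ⟨|r|, abs_nonneg r, by rw [hr, sq_abs, sq]⟩
    have hrr := abs_of_nonneg hr_nonneg
    have hr0 : r ≠ 0 := by rintro rfl; simp [ha0] at har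
    have hr1 : |r| ≠ 1 := fun h => ha1 (by rw [har, ← hrr, h, one_pow])
    have hlt : ratSize |r| < n := by
      have := two_le_ratSize hr0 hr1
      rw [hrr, ← hn, har, ratSize_sq]
      nlinarith
    obtain ⟨ε₁, δ, d, T, hε₁, hδ, hT, hTs, hT4, hne, b, hb, hrd⟩ := ih _ hlt hr0 hr1 rfl
    obtain ⟨ε, hε, ha⟩ := exists_neg_one_pow_mul_abs a
    refine ⟨ε, δ, d + 1, T, hε, hδ, hT, hTs, hT4, hne, b, hb, ?_⟩
    rw [ha, har, hrd, pow_succ 2 d, pow_mul]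
    interval_cases ε₁ <;> ring
  · obtain ⟨ε, δ, T, b, hε, hδ, hTs, hT4, ha⟩ := Rat.exists_neg_one_pow_mul_sq_mul_two_pow_mul a
    have hb : b ≠ 0 := by rintro rfl; simp [ha] at ha0
    refine ⟨ε, δ, 0, T, hε, hδ, Int.odd_iff.mpr (by omega), hTs, hT4, ?_, b, hb, by simpa⟩
    rintro ⟨rfl, rfl⟩
    refine hsq ⟨|b|, ?_⟩
    rw [ha, abs_mul, abs_pow, abs_neg, abs_one]
    simp [abs_mul_abs_self, sq]

theorem IsIndexDecomposition.unique {a : ℚ} {ε δ d ε' δ' d' : ℕ} {T T' : ℤ}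
    (h : IsIndexDecomposition a ε δ d T) (h' : IsIndexDecomposition a ε' δ' d' T') :
    ε = ε' ∧ δ = δ' ∧ d = d' ∧ T = T' := by
  obtain ⟨hε, hδ, -, hTs, hT4, hne, b, hb, rfl⟩ := h
  obtain ⟨hε', hδ', -, hTs', hT4', hne', b', hb', ha⟩ := h'
  have habs := congrArg abs ha
  rw [abs_mul, abs_mul, abs_neg_one_pow, abs_neg_one_pow, one_mul, one_mul, abs_pow,
    abs_pow] at habs
  obtain ⟨rfl, hcc⟩ := eq_of_pow_two_pow_eq_of_not_isSquare (abs_nonneg _) (abs_nonneg _)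
    (not_isSquare_abs_sq_mul_two_pow_mul hδ hTs hT4 hne hb)
    (not_isSquare_abs_sq_mul_two_pow_mul hδ' hTs' hT4' hne' hb') habs
  obtain ⟨hc, rfl, rfl⟩ := eq_of_abs_sq_mul_two_pow_mul_eq hδ hδ' hTs hTs' hT4 hT4' hb hcc
  rw [← hc] at ha
  have hc0 : (b ^ 2 * 2 ^ δ * (T : ℚ)) ^ 2 ^ d ≠ 0 := by
    have : (T : ℚ) ≠ 0 := by exact_mod_cast (show T ≠ 0 by omega)
    positivity
  have hsign := mul_right_cancel₀ hc0 ha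
  refine ⟨?_, rfl, rfl, rfl⟩
  interval_cases ε <;> interval_cases ε' <;> first | rfl | norm_num at hsign

theorem stmt_10 (a : ℚ) (ha0 : a ≠ 0) (ha1 : a ≠ 1) (ham1 : a ≠ -1) :
    ∃! x : ℕ × ℕ × ℕ × ℤ, IsIndexDecomposition a x.1 x.2.1 x.2.2.1 x.2.2.2 := by
  have habs : |a| ≠ 1 := fun h => (abs_eq zero_le_one).mp h |>.elim ha1 ham1
  obtain ⟨ε, δ, d, T, h⟩ := exists_isIndexDecomposition ha0 habs
  refine ⟨(ε, δ, d, T), h, fun ⟨ε', δ', d', T'⟩ h' => ?_⟩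
  obtain ⟨rfl, rfl, rfl, rfl⟩ := h'.unique h
  rfl
end

section
/- Let a = n/d be a rational number in lowest terms, a ∉ {0, ±1}, and let b be another rational number which is not 0 or ±1. For every prime p not dividing the numerators/denominators of a and b: if 4|nd| divides Ind_p(b), then p ≡ 1 (mod 4|nd|), and consequently 2 divides Ind_p(a). Hence the pair index map p ↦ (Ind_p(a), Ind_p(b)) is never surjective onto ℤ_{>0}² for a, b ∈ ℚ^×. -/
/-- The index `Ind_p(x) = (p-1)/ord_p(x)` of a rational `x` modulo a prime `p` (for `p` not
dividing the numerator and denominator of `x`). -/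
noncomputable def ratInd (p : ℕ) (x : ℚ) : ℕ :=
  (p - 1) / orderOf ((x.num : ZMod p) * (x.den : ZMod p)⁻¹)

lemma ratInd_aux (p : ℕ) (hp : p.Prime) (x : ℚ) (hn : ¬ (p : ℤ) ∣ x.num) (hd : ¬ p ∣ x.den) :
    ((x.num : ZMod p) * (x.den : ZMod p)⁻¹) ≠ 0 ∧
    orderOf ((x.num : ZMod p) * (x.den : ZMod p)⁻¹) ∣ p - 1 ∧
    0 < orderOf ((x.num : ZMod p) * (x.den : ZMod p)⁻¹) := by
  haveI : Fact p.Prime := ⟨hp⟩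
  have hnum : (x.num : ZMod p) ≠ 0 := by
    rwa [Ne, ZMod.intCast_zmod_eq_zero_iff_dvd]
  have hden : (x.den : ZMod p) ≠ 0 := by
    rwa [Ne, ZMod.natCast_eq_zero_iff]
  have hx : ((x.num : ZMod p) * (x.den : ZMod p)⁻¹) ≠ 0 :=
    mul_ne_zero hnum (inv_ne_zero hden)
  have hpow : ((x.num : ZMod p) * (x.den : ZMod p)⁻¹) ^ (p - 1) = 1 :=
    ZMod.pow_card_sub_one_eq_one hx
  have hdvd : orderOf ((x.num : ZMod p) * (x.den : ZMod p)⁻¹) ∣ p - 1 :=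
    orderOf_dvd_of_pow_eq_one hpow
  have hp1 : 0 < p - 1 := by have := hp.two_le; omega
  exact ⟨hx, hdvd, orderOf_pos_iff.mpr (isOfFinOrder_iff_pow_eq_one.mpr ⟨p - 1, hp1, hpow⟩)⟩

theorem stmt_15 (a b : ℚ)
    (ha0 : a ≠ 0) (ha1 : a ≠ 1) (ham1 : a ≠ -1)
    (hb0 : b ≠ 0) (hb1 : b ≠ 1) (hbm1 : b ≠ -1) :
    (∀ p : ℕ, p.Prime →
      ¬ (p : ℤ) ∣ a.num → ¬ p ∣ a.den → ¬ (p : ℤ) ∣ b.num → ¬ p ∣ b.den →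
      4 * (a.num * (a.den : ℤ)).natAbs ∣ ratInd p b →
        p % (4 * (a.num * (a.den : ℤ)).natAbs) = 1 ∧ 2 ∣ ratInd p a) ∧
    ¬ (∀ h₁ h₂ : ℕ, 0 < h₁ → 0 < h₂ →
        ∃ p : ℕ, p.Prime ∧
          ¬ (p : ℤ) ∣ a.num ∧ ¬ p ∣ a.den ∧ ¬ (p : ℤ) ∣ b.num ∧ ¬ p ∣ b.den ∧
          ratInd p a = h₁ ∧ ratInd p b = h₂) := by
  set m : ℤ := a.num * (a.den : ℤ) with hm
  have hmne : m ≠ 0 := mul_ne_zero (Rat.num_ne_zero.mpr ha0) (by exact_mod_cast a.den_nz)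
  have hMpos : 0 < m.natAbs := Int.natAbs_pos.mpr hmne
  have main : ∀ p : ℕ, p.Prime →
      ¬ (p : ℤ) ∣ a.num → ¬ p ∣ a.den → ¬ (p : ℤ) ∣ b.num → ¬ p ∣ b.den →
      4 * m.natAbs ∣ ratInd p b →
        p % (4 * m.natAbs) = 1 ∧ 2 ∣ ratInd p a := by
    intro p hp han had hbn hbd hdvd
    haveI : Fact p.Prime := ⟨hp⟩
    obtain ⟨hbx, hbord, hbordpos⟩ := ratInd_aux p hp b hbn hbd
    obtain ⟨hax, haord, haordpos⟩ := ratInd_aux p hp a han had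
    -- ratInd p b divides p - 1
    have hIb : ratInd p b ∣ p - 1 := Nat.div_dvd_of_dvd hbord
    have h4m : 4 * m.natAbs ∣ p - 1 := hdvd.trans hIb
    have h4 : (4 : ℕ) ∣ p - 1 := (dvd_mul_right 4 m.natAbs).trans h4m
    have hp2 : 2 ≤ p := hp.two_le
    obtain ⟨k, hk⟩ := h4m
    have hmod : p % (4 * m.natAbs) = 1 := by
      have hpk : p = 4 * m.natAbs * k + 1 := by omega
      rw [hpk, Nat.mul_add_mod]
      exact Nat.mod_eq_of_lt (by omega)
    refine ⟨hmod, ?_⟩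
    -- p is odd
    have hpodd : Odd p := by
      rcases Nat.Prime.eq_two_or_odd' hp with h2 | h
      · exfalso; obtain ⟨j, hj⟩ := h4; omega
      · exact h
    -- legendre symbol of m is 1
    have hleg : legendreSym p m = 1 := by
      rw [jacobiSym.legendreSym.to_jacobiSym, jacobiSym.mod_right m hpodd, hmod,
        jacobiSym.one_right]
    have hnum : (a.num : ZMod p) ≠ 0 := by rwa [Ne, ZMod.intCast_zmod_eq_zero_iff_dvd]
    have hden : (a.den : ZMod p) ≠ 0 := by rwa [Ne, ZMod.natCast_eq_zero_iff]
    have hmzmod : ((m : ℤ) : ZMod p) ≠ 0 := by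
      rw [hm]; push_cast; exact mul_ne_zero hnum hden
    obtain ⟨s, hs⟩ : IsSquare ((m : ℤ) : ZMod p) := (legendreSym.eq_one_iff p hmzmod).mp hleg
    have hs' : (a.num : ZMod p) * (a.den : ZMod p) = s * s := by
      rw [← hs, hm]; push_cast; ring
    have h1 : (a.den : ZMod p) * (a.den : ZMod p)⁻¹ = 1 := mul_inv_cancel₀ hden
    have habsq : (a.num : ZMod p) * (a.den : ZMod p)⁻¹ =
        (s * (a.den : ZMod p)⁻¹) * (s * (a.den : ZMod p)⁻¹) := by
      linear_combination ((a.den : ZMod p)⁻¹ * (a.den : ZMod p)⁻¹) * hs'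
        - (a.num : ZMod p) * (a.den : ZMod p)⁻¹ * h1
    have htne : s * (a.den : ZMod p)⁻¹ ≠ 0 := by
      intro h0
      exact hax (by rw [habsq, h0, mul_zero])
    -- 2 divides p - 1
    obtain ⟨q, hq⟩ : 2 ∣ p - 1 := by obtain ⟨j, hj⟩ := hpodd; omega
    have hpow : ((a.num : ZMod p) * (a.den : ZMod p)⁻¹) ^ q = 1 := by
      have h2 : ((a.num : ZMod p) * (a.den : ZMod p)⁻¹) ^ q
          = (s * (a.den : ZMod p)⁻¹) ^ (2 * q) := by
        rw [habsq, ← sq, ← pow_mul]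
      rw [h2, ← hq, ZMod.pow_card_sub_one_eq_one htne]
    obtain ⟨r, hr⟩ : orderOf ((a.num : ZMod p) * (a.den : ZMod p)⁻¹) ∣ q :=
      orderOf_dvd_of_pow_eq_one hpow
    have hfin : p - 1 = orderOf ((a.num : ZMod p) * (a.den : ZMod p)⁻¹) * (2 * r) := by
      rw [hq, hr]; ring
    have : ratInd p a = 2 * r := by
      unfold ratInd
      rw [hfin, Nat.mul_div_cancel_left _ haordpos]
    rw [this]
    exact ⟨r, rfl⟩
  refine ⟨main, ?_⟩
  intro H
  obtain ⟨p, hp, h1, h2, h3, h4, hia, hib⟩ := H 1 (4 * m.natAbs) one_pos (by positivity)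
  obtain ⟨-, h2dvd⟩ := main p hp h1 h2 h3 h4 (hib ▸ dvd_refl _)
  rw [hia] at h2dvd
  omega
end

section
/- Let ℓ be a prime and q a prime with q ≡ 1 (mod ℓ). For e ≥ 1 set ε_q = min(e, v_ℓ(q−1)). There exists an algebraic integer g ∈ ℚ(ζ_{ℓ^e q}) with g^{ℓ^e} ∈ ℚ(ζ_{ℓ^e}) such that the degree [ℚ(ζ_{ℓ^e}, g) : ℚ(ζ_{ℓ^e})] has ℓ-adic valuation exactly ε_q. -/
/-!
Put `E = ℚ(ζ_{ℓ^e})` and let `η` be a primitive `q`-th root of unity. Since `ℓ^e` and `q` are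
coprime, `φ(ℓ^e q) = φ(ℓ^e) (q - 1)` forces `[E(η) : E] = q - 1`; the extension `E(η)/E` is
Galois with group embedded in `(ℤ/q)ˣ`, hence cyclic. With `d = ℓ^ε` dividing both `ℓ^e` and
`q - 1`, the subextension of degree `d` is again cyclic and `E` contains the `d`-th roots of unity,
so Kummer theory produces `α` with `α^d ∈ E` and `[E(α) : E] = d`. A nonzero integer multiple of
`α` is an algebraic integer generating the same extension of `E`.
-/

open IntermediateField Module Polynomial

theorem IsCyclic.exists_subgroup_index_eq {G : Type*} [Group G] [IsCyclic G] [Finite G] {d : ℕ}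
    (hd : d ∣ Nat.card G) : ∃ H : Subgroup G, H.index = d := by
  let := IsCyclic.commGroup (α := G)
  exact ⟨(powMonoidHom d : G →* G).range, by
    rw [IsCyclic.index_powMonoidHom_range, Nat.gcd_eq_right hd]⟩

section Kummer

variable (E L : Type*) [Field E] [Field L] [Algebra E L] [FiniteDimensional E L] [IsGalois E L]
  [IsCyclic Gal(L/E)]

theorem exists_intermediateField_finrank_eq_of_isCyclic {d : ℕ} (hd : d ∣ finrank E L) :
    ∃ K : IntermediateField E L, finrank E K = d ∧ IsGalois E K ∧ IsCyclic Gal(K/E) := by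
  obtain ⟨H, hH⟩ := IsCyclic.exists_subgroup_index_eq
    (show d ∣ Nat.card Gal(L/E) by rwa [IsGalois.card_aut_eq_finrank])
  refine ⟨fixedField H, ?_, IsGalois.of_fixedField_normal_subgroup H, ?_⟩
  · rw [finrank_eq_fixingSubgroup_index, fixingSubgroup_fixedField, hH]
  · have := isCyclic_of_surjective _ (QuotientGroup.mk'_surjective H)
    exact isCyclic_of_surjective _ (IsGalois.normalAutEquivQuotient H).surjective

theorem exists_pow_mem_range_natDegree_minpoly_eq_of_isCyclic {d : ℕ} (hd : d ∣ finrank E L)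
    (hE : (primitiveRoots d E).Nonempty) :
    ∃ α : L, α ^ d ∈ Set.range (algebraMap E L) ∧ (minpoly E α).natDegree = d := by
  obtain ⟨K, hK, _, _⟩ := exists_intermediateField_finrank_eq_of_isCyclic E L hd
  obtain ⟨α, ⟨a, ha⟩, hα⟩ := exists_root_adjoin_eq_top_of_isCyclic E K (hK ▸ hE)
  refine ⟨α, ⟨a, by rw [← hK, ← SubmonoidClass.coe_pow, ← ha]; rfl⟩, ?_⟩
  rw [← minpoly_eq, ← adjoin.finrank (.of_finite E α), hα,
    finrank_top', hK]

end Kummer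

theorem IsCyclotomicExtension.isCyclic_of_prime (p : ℕ) [Fact p.Prime] (K L : Type*)
    [Field K] [Field L] [Algebra K L] [IsCyclotomicExtension {p} K L] : IsCyclic Gal(L/K) := by
  have := IsCyclotomicExtension.finiteDimensional {p} K L
  have hζ := IsCyclotomicExtension.zeta_spec p K L
  exact isCyclic_of_injective_ringHom ((Units.coeHom (ZMod p)).comp (hζ.autToPow K))
    (Units.val_injective.comp (hζ.autToPow_injective K))

section Cyclotomic

variable {L : Type*} [Field L] [CharZero L]

theorem IsPrimitiveRoot.finrank_rat_adjoin {ξ : L} {n : ℕ} [NeZero n]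
    (hξ : IsPrimitiveRoot ξ n) : finrank ℚ ℚ⟮ξ⟯ = n.totient := by
  rw [adjoin.finrank (hξ.isIntegral (NeZero.pos n)).tower_top,
    ← cyclotomic_eq_minpoly_rat hξ (NeZero.pos n), natDegree_cyclotomic]

theorem IsPrimitiveRoot.finrank_adjoin_adjoin_of_coprime {ξ η : L} {n q : ℕ} [NeZero n]
    [NeZero q] (hξ : IsPrimitiveRoot ξ n) (hη : IsPrimitiveRoot η q) (hnq : n.Coprime q) :
    finrank ℚ⟮ξ⟯ ℚ⟮ξ⟯⟮η⟯ = q.totient := by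
  have hηE : IsIntegral ℚ⟮ξ⟯ η := (hη.isIntegral (NeZero.pos q)).tower_top
  have := adjoin.finiteDimensional (hξ.isIntegral (NeZero.pos n)).tower_top (K := ℚ)
  have := adjoin.finiteDimensional hηE
  have := FiniteDimensional.trans ℚ ℚ⟮ξ⟯ ℚ⟮ξ⟯⟮η⟯
  apply le_antisymm
  · rw [adjoin.finrank hηE, ← natDegree_cyclotomic q ℚ⟮ξ⟯]
    refine natDegree_le_of_dvd (minpoly.dvd _ _ ?_) (cyclotomic_ne_zero q _)
    simpa [aeval_def, eval₂_eq_eval_map] using hη.isRoot_cyclotomic (NeZero.pos q)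
  · have hξ' : IsPrimitiveRoot (⟨ξ, ℚ⟮ξ⟯⟮η⟯.algebraMap_mem ⟨ξ, mem_adjoin_simple_self ℚ ξ⟩⟩ :
        ℚ⟮ξ⟯⟮η⟯) n := IsPrimitiveRoot.coe_submonoidClass_iff.mp hξ
    have hη' : IsPrimitiveRoot (⟨η, mem_adjoin_simple_self _ η⟩ : ℚ⟮ξ⟯⟮η⟯) q :=
      IsPrimitiveRoot.coe_submonoidClass_iff.mp hη
    have key := hξ'.lcm_totient_le_finrank hη'
      (cyclotomic.irreducible_rat (Nat.lcm_pos (NeZero.pos n) (NeZero.pos q)))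
    have : Module.Free ℚ⟮ξ⟯ ℚ⟮ξ⟯⟮η⟯ := Module.Free.of_divisionRing _ _
    rw [hnq.lcm_eq_mul, Nat.totient_mul hnq, ← finrank_mul_finrank ℚ ℚ⟮ξ⟯ ℚ⟮ξ⟯⟮η⟯,
      hξ.finrank_rat_adjoin] at key
    exact Nat.le_of_mul_le_mul_left key (Nat.totient_pos.mpr (NeZero.pos n))

theorem IsPrimitiveRoot.exists_mem_adjoin_pow_mem_finrank_adjoin_eq {ζ : L} {n q d : ℕ}
    [NeZero n] [Fact q.Prime] (hζ : IsPrimitiveRoot ζ (n * q)) (hnq : n.Coprime q)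
    (hdn : d ∣ n) (hdq : d ∣ q - 1) :
    ∃ x ∈ ℚ⟮ζ⟯, x ^ d ∈ ℚ⟮ζ ^ q⟯ ∧ finrank ℚ⟮ζ ^ q⟯ ℚ⟮ζ ^ q⟯⟮x⟯ = d := by
  have hnq0 : 0 < n * q := Nat.mul_pos (NeZero.pos n) (Fact.out : q.Prime).pos
  have hξ : IsPrimitiveRoot (ζ ^ q) n := hζ.pow hnq0 (mul_comm n q)
  have hη : IsPrimitiveRoot (ζ ^ n) q := hζ.pow hnq0 rfl
  set E := ℚ⟮ζ ^ q⟯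
  set M := E⟮ζ ^ n⟯
  have : IsCyclotomicExtension {q} E M :=
    (isCyclotomicExtension_singleton_iff_eq_adjoin q E L M hη).mpr rfl
  have := IsCyclotomicExtension.finiteDimensional {q} E M
  have := IsCyclotomicExtension.isGalois {q} E M
  have := IsCyclotomicExtension.isCyclic_of_prime q E M
  have hEroot : (primitiveRoots d E).Nonempty := by
    have hd0 : 0 < d := Nat.pos_of_dvd_of_pos hdn (NeZero.pos n)
    refine ⟨⟨(ζ ^ q) ^ (n / d), pow_mem (mem_adjoin_simple_self ℚ _) _⟩, ?_⟩
    rw [mem_primitiveRoots hd0, ← IsPrimitiveRoot.coe_submonoidClass_iff]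
    exact hξ.pow (NeZero.pos n) (Nat.div_mul_cancel hdn).symm
  obtain ⟨α, ⟨a, ha⟩, hα⟩ := exists_pow_mem_range_natDegree_minpoly_eq_of_isCyclic E M
    (by rwa [hξ.finrank_adjoin_adjoin_of_coprime hη hnq, Nat.totient_prime Fact.out]) hEroot
  have hMζ : M.restrictScalars ℚ ≤ ℚ⟮ζ⟯ := by
    rw [show M.restrictScalars ℚ = ℚ⟮ζ ^ q, ζ ^ n⟯ from adjoin_simple_adjoin_simple ℚ _ _,
      adjoin_le_iff, Set.pair_subset_iff]
    exact ⟨pow_mem (mem_adjoin_simple_self ℚ ζ) q, pow_mem (mem_adjoin_simple_self ℚ ζ) n⟩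
  refine ⟨α, hMζ α.2, ?_, ?_⟩
  · rw [← SubmonoidClass.coe_pow, ← ha]
    exact a.2
  · rw [adjoin.finrank (isIntegral_iff.mp (.of_finite E α)), ← minpoly_eq, hα]

end Cyclotomic

namespace IntermediateField

variable {F E : Type*} [Field F] [Field E] [Algebra F E]

theorem adjoin_simple_smul_of_ne_zero {c : F} (hc : c ≠ 0) (x : E) : F⟮c • x⟯ = F⟮x⟯ := by
  refine le_antisymm (adjoin_simple_le_iff.mpr (smul_mem _ (mem_adjoin_simple_self F x)))
    (adjoin_simple_le_iff.mpr ?_)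
  simpa [inv_smul_smul₀ hc] using smul_mem F⟮c • x⟯ (mem_adjoin_simple_self F (c • x)) (x := c⁻¹)

theorem finrank_adjoin_pair_div_finrank_adjoin {x : E} (hx : IsIntegral F x) (y : E) :
    finrank F F⟮x, y⟯ / finrank F F⟮x⟯ = finrank F⟮x⟯ F⟮x⟯⟮y⟯ := by
  have := adjoin.finiteDimensional hx
  rw [← adjoin_simple_adjoin_simple]
  change finrank F F⟮x⟯⟮y⟯ / _ = _
  rw [← finrank_mul_finrank F F⟮x⟯, Nat.mul_div_cancel_left _ finrank_pos]

end IntermediateField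

open Complex IntermediateField in
theorem stmt_16_general (ℓ q : ℕ) (hℓ : ℓ.Prime) (hq : q.Prime) (hmod : q % ℓ = 1)
    (e : ℕ) :
    ∃ g : ℂ, IsIntegral ℤ g ∧
      g ∈ ℚ⟮Complex.exp (2 * Real.pi * I / ((ℓ ^ e * q : ℕ)))⟯ ∧
      g ^ (ℓ ^ e) ∈ ℚ⟮Complex.exp (2 * Real.pi * I / ((ℓ ^ e : ℕ)))⟯ ∧
      ∀ E F : IntermediateField ℚ ℂ,
        E = ℚ⟮Complex.exp (2 * Real.pi * I / ((ℓ ^ e : ℕ)))⟯ →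
        F = ℚ⟮Complex.exp (2 * Real.pi * I / ((ℓ ^ e : ℕ))), g⟯ →
        padicValNat ℓ (Module.finrank ℚ F / Module.finrank ℚ E) =
          min e (padicValNat ℓ (q - 1)) := by
  have := Fact.mk hℓ
  have := Fact.mk hq
  have := NeZero.of_pos (pow_pos hℓ.pos e)
  have hℓq : ℓ ≠ q := by rintro rfl; simp at hmod
  have hcop : (ℓ ^ e).Coprime q := ((Nat.coprime_primes hℓ hq).mpr hℓq).pow_left e
  set ζ := exp (2 * Real.pi * I / ((ℓ ^ e * q : ℕ)))
  have hζ : IsPrimitiveRoot ζ (ℓ ^ e * q) := isPrimitiveRoot_exp _ (NeZero.ne _)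
  have hζq : exp (2 * Real.pi * I / ((ℓ ^ e : ℕ))) = ζ ^ q := by
    rw [← exp_nat_mul]
    congr 1
    push_cast
    field_simp [hq.ne_zero]
  obtain ⟨x, hxK, hxE, hxdeg⟩ := hζ.exists_mem_adjoin_pow_mem_finrank_adjoin_eq hcop
    (pow_dvd_pow ℓ (min_le_left _ _)) ((pow_dvd_pow ℓ (min_le_right _ _)).trans pow_padicValNat_dvd)
  have := adjoin.finiteDimensional (hζ.isIntegral (NeZero.pos _)).tower_top (K := ℚ)
  have hxalg : IsAlgebraic ℤ x := (IsFractionRing.isAlgebraic_iff ℤ ℚ ℂ).mpr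
    (isIntegral_iff.mp (IsIntegral.of_finite ℚ (⟨x, hxK⟩ : ℚ⟮ζ⟯))).isAlgebraic
  obtain ⟨c, hc, hcx⟩ := hxalg.exists_integral_multiple
  refine ⟨c • x, hcx, zsmul_mem hxK c, ?_, ?_⟩
  · rw [hζq, ← pow_mul_pow_sub ℓ (min_le_left e (padicValNat ℓ (q - 1))), pow_mul, _root_.smul_pow]
    exact pow_mem (zsmul_mem hxE _) _
  · rintro E F rfl rfl
    have hξ : IsIntegral ℚ (ζ ^ q) := ((hζ.isIntegral (NeZero.pos _)).pow q).tower_top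
    rw [hζq, finrank_adjoin_pair_div_finrank_adjoin hξ, ← Int.cast_smul_eq_zsmul ℚ⟮ζ ^ q⟯, adjoin_simple_smul_of_ne_zero (Int.cast_ne_zero.mpr hc),
      hxdeg, padicValNat.prime_pow]

open Complex IntermediateField in
theorem stmt_16 (ℓ q : ℕ) (hℓ : ℓ.Prime) (hq : q.Prime) (hmod : q % ℓ = 1)
    (e : ℕ) (he : 1 ≤ e) :
    ∃ g : ℂ, IsIntegral ℤ g ∧
      g ∈ ℚ⟮Complex.exp (2 * Real.pi * I / ((ℓ ^ e * q : ℕ)))⟯ ∧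
      g ^ (ℓ ^ e) ∈ ℚ⟮Complex.exp (2 * Real.pi * I / ((ℓ ^ e : ℕ)))⟯ ∧
      ∀ E F : IntermediateField ℚ ℂ,
        E = ℚ⟮Complex.exp (2 * Real.pi * I / ((ℓ ^ e : ℕ)))⟯ →
        F = ℚ⟮Complex.exp (2 * Real.pi * I / ((ℓ ^ e : ℕ))), g⟯ →
        padicValNat ℓ (Module.finrank ℚ F / Module.finrank ℚ E) =
          min e (padicValNat ℓ (q - 1)) :=
  stmt_16_general ℓ q hℓ hq hmod e
end
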